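/- Let β ∈ (0,1] and x ≥ 1. Then (1−β)(x−1) − x^{1−β/2} + x^{β/2} ≥ 0. -/

import Mathlib

/-!
Put `s = log x / 2` and `a = 1 - β`. Then `x - 1 = 2 √x sinh s` and
`x ^ (1 - β / 2) - x ^ (β / 2) = 2 √x sinh (a s)`, so the inequality is `sinh (a s) ≤ a sinh s`
for `a ∈ [0, 1]` and `s ≥ 0`: convexity of `sinh` on `[0, ∞)` together with `sinh 0 = 0`.
-/

open Real Set

lemma Real.convexOn_sinh : ConvexOn ℝ (Ici 0) sinh := by
  refine MonotoneOn.convexOn_of_deriv (convex_Ici 0) continuous_sinh.continuousOn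
    differentiable_sinh.differentiableOn ?_
  intro s hs t ht hst
  rw [interior_Ici] at hs ht
  simp only [deriv_sinh]
  exact cosh_le_cosh.mpr (by rwa [abs_of_pos hs, abs_of_pos ht])

lemma Real.sinh_mul_le_mul_sinh {a s : ℝ} (ha₀ : 0 ≤ a) (ha₁ : a ≤ 1) (hs : 0 ≤ s) :
    sinh (a * s) ≤ a * sinh s := by
  simpa using convexOn_sinh.2 (mem_Ici.mpr hs) (mem_Ici.mpr le_rfl) ha₀ (sub_nonneg.mpr ha₁)
    (add_sub_cancel a 1)

lemma Real.rpow_half_add_sub_rpow_half_sub {x : ℝ} (hx : 0 < x) (c : ℝ) :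
    x ^ (1 / 2 + c) - x ^ (1 / 2 - c) = 2 * x ^ (1 / 2 : ℝ) * sinh (c * log x) := by
  simp only [rpow_def_of_pos hx, sinh_eq, mul_add, mul_sub, exp_add, exp_sub, exp_neg]
  field_simp

theorem stmt_1 (β x : ℝ) (hβ : β ∈ Set.Ioc (0:ℝ) 1) (hx : 1 ≤ x) :
    (1 - β) * (x - 1) - x ^ (1 - β / 2) + x ^ (β / 2) ≥ 0 := by
  have hx₀ : 0 < x := one_pos.trans_le hx
  have hsinh : sinh ((1 - β) / 2 * log x) ≤ (1 - β) * sinh (1 / 2 * log x) := by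
    have := sinh_mul_le_mul_sinh (sub_nonneg.mpr hβ.2) (by linarith [hβ.1])
      (mul_nonneg one_half_pos.le (log_nonneg hx))
    rwa [← mul_assoc, mul_one_div] at this
  have hsub : x - 1 = 2 * x ^ (1 / 2 : ℝ) * sinh (1 / 2 * log x) := by
    convert rpow_half_add_sub_rpow_half_sub hx₀ (1 / 2) using 2 <;> norm_num
  have : x ^ (1 - β / 2) - x ^ (β / 2) ≤ (1 - β) * (x - 1) :=
    calc x ^ (1 - β / 2) - x ^ (β / 2)
        = 2 * x ^ (1 / 2 : ℝ) * sinh ((1 - β) / 2 * log x) := by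
          convert rpow_half_add_sub_rpow_half_sub hx₀ ((1 - β) / 2) using 3 <;> ring
      _ ≤ 2 * x ^ (1 / 2 : ℝ) * ((1 - β) * sinh (1 / 2 * log x)) := by gcongr
      _ = (1 - β) * (x - 1) := by rw [hsub]; ring
  linarith
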